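/- Let V ⊆ ℂ^n be a ℂ-linear subspace not contained in any coordinate hyperplane, let S ⊆ {1,…,n}, and set V_1 := {v ∈ V : π_{S^c}(v) = 0} and V_2 := {v ∈ V : π_S(v) = 0}. If V = V_1 ⊕ V_2, then under the identification (ℂˣ)^n = (ℂˣ)^S × (ℂˣ)^{S^c} one has V ∩ (ℂˣ)^n = (π_S(V_1) ∩ (ℂˣ)^S) × (π_{S^c}(V_2) ∩ (ℂˣ)^{S^c}), and consequently Arg(V ∩ (ℂˣ)^n) = Arg(π_S(V_1) ∩ (ℂˣ)^S) × Arg(π_{S^c}(V_2) ∩ (ℂˣ)^{S^c}) and Log(V ∩ (ℂˣ)^n) = Log(π_S(V_1) ∩ (ℂˣ)^S) × Log(π_{S^c}(V_2) ∩ (ℂˣ)^{S^c}). (Lemma 2.10(2): a hyperplane complement of a disconnected arrangement, and its coamoeba and amoeba, are products.) -/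

import Mathlib

open Filter Topology

/-- `Arg`, the coordinatewise argument (on any index type). -/
noncomputable def ArgMap {ι : Type*} (z : ι → ℂ) : ι → ℂ :=
  fun i => z i / ‖z i‖

/-- `Log`, the coordinatewise logarithm of absolute value (on any index type). -/
noncomputable def LogMap {ι : Type*} (z : ι → ℂ) : ι → ℝ :=
  fun i => Real.log ‖z i‖

/-- The projection of `W ⊆ ℂ^n` to the coordinates in `S`, intersected with the torus
`(ℂˣ)^S`: the restrictions to `S` of elements of `W` which are nonzero on `S`. -/
def restrictTorus {n : ℕ} (W : Set (Fin n → ℂ)) (S : Set (Fin n)) : Set (↥S → ℂ) :=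
  {u | ∃ v ∈ W, (∀ i : S, u i = v i) ∧ ∀ i : S, v i ≠ 0}

/-- **Lemma 2.10(2).** Let `V ⊆ ℂ^n` be a linear subspace contained in no
coordinate hyperplane, `S ⊆ {1,…,n}`, `V₁ := {v ∈ V : π_{S^c} v = 0}` and
`V₂ := {v ∈ V : π_S v = 0}`.  If `V = V₁ ⊕ V₂` then
`V ∩ (ℂˣ)^n = (π_S(V₁) ∩ (ℂˣ)^S) × (π_{S^c}(V₂) ∩ (ℂˣ)^{S^c})`, and the coamoeba and
amoeba of `V ∩ (ℂˣ)^n` are the corresponding products. -/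
theorem stmt9 {n : ℕ} (V : Submodule ℂ (Fin n → ℂ))
    (hV : ∀ i, ∃ v ∈ V, v i ≠ 0)
    (S : Set (Fin n))
    (V₁ V₂ : Set (Fin n → ℂ))
    (hV₁ : V₁ = {v | v ∈ V ∧ ∀ i ∉ S, v i = 0})
    (hV₂ : V₂ = {v | v ∈ V ∧ ∀ i ∈ S, v i = 0})
    (hsum : ∀ v ∈ V, ∃ v₁ ∈ V₁, ∃ v₂ ∈ V₂, v = v₁ + v₂)
    (hdisj : ∀ v, v ∈ V₁ → v ∈ V₂ → v = 0) :
    ({z : Fin n → ℂ | z ∈ V ∧ ∀ i, z i ≠ 0} =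
      {z : Fin n → ℂ |
        (fun i : S => z i) ∈ restrictTorus V₁ S ∧
        (fun i : ↥(Sᶜ) => z i) ∈ restrictTorus V₂ Sᶜ}) ∧
    (ArgMap '' {z : Fin n → ℂ | z ∈ V ∧ ∀ i, z i ≠ 0} =
      {θ : Fin n → ℂ |
        (fun i : S => θ i) ∈ ArgMap '' restrictTorus V₁ S ∧
        (fun i : ↥(Sᶜ) => θ i) ∈ ArgMap '' restrictTorus V₂ Sᶜ}) ∧
    (LogMap '' {z : Fin n → ℂ | z ∈ V ∧ ∀ i, z i ≠ 0} =
      {ρ : Fin n → ℝ |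
        (fun i : S => ρ i) ∈ LogMap '' restrictTorus V₁ S ∧
        (fun i : ↥(Sᶜ) => ρ i) ∈ LogMap '' restrictTorus V₂ Sᶜ}) := by
  have h1z : ∀ v ∈ V₁, ∀ i, i ∉ S → v i = 0 := by rw [hV₁]; exact fun v hv => hv.2
  have h1V : ∀ v ∈ V₁, v ∈ V := by rw [hV₁]; exact fun v hv => hv.1
  have h2z : ∀ v ∈ V₂, ∀ i, i ∈ S → v i = 0 := by rw [hV₂]; exact fun v hv => hv.2
  have h2V : ∀ v ∈ V₂, v ∈ V := by rw [hV₂]; exact fun v hv => hv.1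
  have key : {z : Fin n → ℂ | z ∈ V ∧ ∀ i, z i ≠ 0} =
      {z : Fin n → ℂ | (fun i : S => z i) ∈ restrictTorus V₁ S ∧
        (fun i : ↥(Sᶜ) => z i) ∈ restrictTorus V₂ Sᶜ} := by
    ext z
    constructor
    · rintro ⟨hzV, hz⟩
      obtain ⟨v₁, hv₁, v₂, hv₂, hzsum⟩ := hsum z hzV
      have hzS : ∀ i : S, z i = v₁ i := fun i => by
        rw [hzsum]; simp [Pi.add_apply, h2z v₂ hv₂ i i.2]
      have hzSc : ∀ i : ↥(Sᶜ), z i = v₂ i := fun i => by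
        rw [hzsum]; simp [Pi.add_apply, h1z v₁ hv₁ i i.2]
      exact ⟨⟨v₁, hv₁, hzS, fun i => (hzS i) ▸ hz i⟩,
             ⟨v₂, hv₂, hzSc, fun i => (hzSc i) ▸ hz i⟩⟩
    · rintro ⟨⟨v₁, hv₁, hu1, hn1⟩, ⟨v₂, hv₂, hu2, hn2⟩⟩
      have hz : ∀ i, z i = v₁ i + v₂ i := by
        intro i
        by_cases hi : i ∈ S
        · rw [h2z v₂ hv₂ i hi, add_zero]; exact hu1 ⟨i, hi⟩
        · rw [h1z v₁ hv₁ i hi, zero_add]; exact hu2 ⟨i, hi⟩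
      have hzeq : z = v₁ + v₂ := funext hz
      refine ⟨hzeq ▸ V.add_mem (h1V v₁ hv₁) (h2V v₂ hv₂), fun i => ?_⟩
      by_cases hi : i ∈ S
      · rw [hz i, h2z v₂ hv₂ i hi, add_zero]; exact hn1 ⟨i, hi⟩
      · rw [hz i, h1z v₁ hv₁ i hi, zero_add]; exact hn2 ⟨i, hi⟩
  have gen : ∀ {α : Type} (g : ℂ → α),
      (fun z : Fin n → ℂ => fun i => g (z i)) '' {z : Fin n → ℂ | z ∈ V ∧ ∀ i, z i ≠ 0} =
      {θ : Fin n → α |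
        (fun i : S => θ i) ∈ (fun u : S → ℂ => fun i => g (u i)) '' restrictTorus V₁ S ∧
        (fun i : ↥(Sᶜ) => θ i) ∈
          (fun u : ↥(Sᶜ) → ℂ => fun i => g (u i)) '' restrictTorus V₂ Sᶜ} := by
    intro α g
    ext θ
    constructor
    · rintro ⟨z, hzmem, rfl⟩
      rw [key] at hzmem
      exact ⟨⟨_, hzmem.1, rfl⟩, ⟨_, hzmem.2, rfl⟩⟩
    · rintro ⟨⟨u, ⟨v₁, hv₁, hu1, hn1⟩, hgu⟩, ⟨w, ⟨v₂, hv₂, hu2, hn2⟩, hgw⟩⟩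
      refine ⟨v₁ + v₂, ?_, ?_⟩
      · rw [key]
        refine ⟨⟨v₁, hv₁, fun i => by simp [Pi.add_apply, h2z v₂ hv₂ i i.2],
                  fun i => hn1 i⟩,
                ⟨v₂, hv₂, fun i => by simp [Pi.add_apply, h1z v₁ hv₁ i i.2],
                  fun i => hn2 i⟩⟩
      · funext i
        by_cases hi : i ∈ S
        · have h : (v₁ + v₂) i = u ⟨i, hi⟩ := by
            simp [Pi.add_apply, h2z v₂ hv₂ i hi, hu1 ⟨i, hi⟩]
          show g ((v₁ + v₂) i) = θ i
          rw [h]; exact congrFun hgu ⟨i, hi⟩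
        · have h : (v₁ + v₂) i = w ⟨i, hi⟩ := by
            simp [Pi.add_apply, h1z v₁ hv₁ i hi, hu2 ⟨i, hi⟩]
          show g ((v₁ + v₂) i) = θ i
          rw [h]; exact congrFun hgw ⟨i, hi⟩
  exact ⟨key, gen (fun w => w / ‖w‖), gen (fun w => Real.log ‖w‖)⟩
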